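/- arXiv:1707.00373 — 3 statements merged into one kernel-verified Lean document; each statement's English description precedes it below -/
import Mathlib

section
/- Let n ≥ 3, ℓ ≥ 1, and let Γ : ({0,1}^ℓ)^n → ℂ be a blockwise symmetric signature of arity nℓ satisfying the Matchgate Identities. Then for all α_1, α_2, …, α_n ∈ {0,1}^ℓ, all i, j ∈ {1,…,ℓ} with i < j, and all s, t ∈ {1,…,ℓ}, the 2×2 matrix A = [[Γ(α_1,α_2,α_3,…,α_n), Γ(α_1,α_2+e_s,α_3+e_t,α_4,…,α_n)], [Γ(α_1+e_i+e_j,α_2,α_3,…,α_n), Γ(α_1+e_i+e_j,α_2+e_s,α_3+e_t,α_4,…,α_n)]] is degenerate, i.e., det(A) = 0. -/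
open Finset

namespace Matchgate

/-- Bitwise XOR of two bit strings. -/
def bxor {m : ℕ} (a b : Fin m → Bool) : Fin m → Bool := fun i => Bool.xor (a i) (b i)

/-- The bit string `e_p` with a `1` in position `p` and `0` elsewhere. -/
def unit {m : ℕ} (p : Fin m) : Fin m → Bool := fun i => decide (i = p)

/-- Hamming weight of a bit string. -/
def wt {m : ℕ} (a : Fin m → Bool) : ℕ := (Finset.univ.filter fun i => a i = true).card

/-- Total Hamming weight of a blockwise bit string. -/
def wtB {n ℓ : ℕ} (α : Fin n → Fin ℓ → Bool) : ℕ := ∑ j, wt (α j)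

/-- Blockwise XOR. -/
def bxorB {n ℓ : ℕ} (α β : Fin n → Fin ℓ → Bool) : Fin n → Fin ℓ → Bool :=
  fun j => bxor (α j) (β j)

/-- The parity bit `p(a) = wt(a) mod 2` of a bit string, as a `Bool`. -/
def pB {m : ℕ} (a : Fin m → Bool) : Bool := decide (wt a % 2 = 1)

/-- A blockwise signature (blocks of size `ℓ`, `n` blocks) is blockwise symmetric if it is
invariant under every permutation of its blocks. -/
def BlockSym {n ℓ : ℕ} (Γ : (Fin n → Fin ℓ → Bool) → ℂ) : Prop :=
  ∀ (σ : Equiv.Perm (Fin n)) (α : Fin n → Fin ℓ → Bool), Γ (α ∘ σ) = Γ α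

/-- The parity condition for a blockwise signature: either all even entries vanish or all
odd entries vanish. -/
def ParityCond {n ℓ : ℕ} (Γ : (Fin n → Fin ℓ → Bool) → ℂ) : Prop :=
  (∀ α, wtB α % 2 = 0 → Γ α = 0) ∨ (∀ α, wtB α % 2 = 1 → Γ α = 0)

/-- The Matchgate Identities for a blockwise signature.  Positions are pairs `(j, i)`
(block `j`, bit `i` within the block) ordered lexicographically block-major, which is the
order of the flattened bit string `α₁α₂⋯αₙ`.  For every pattern `α` and every position set
`P`, the alternating sum `Σ_{p ∈ P} (-1)^{rank of p in P} Γ(α + e_p) Γ(α + P + e_p)`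
vanishes. -/
def MGI {n ℓ : ℕ} (Γ : (Fin n → Fin ℓ → Bool) → ℂ) : Prop :=
  ∀ (α : Fin n → Fin ℓ → Bool) (P : Finset (Fin n × Fin ℓ)),
    ∑ p ∈ P,
      (-1 : ℂ) ^ (P.filter fun q => q.1 < p.1 ∨ (q.1 = p.1 ∧ q.2 ≤ p.2)).card *
        Γ (fun j i => Bool.xor (α j i) (decide ((j, i) = p))) *
        Γ (fun j i => Bool.xor (α j i)
            (Bool.xor (decide ((j, i) ∈ P)) (decide ((j, i) = p)))) = 0

/-- Prepend an element to a length `n - 1` tuple, giving a length `n` tuple. -/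
def cons0 {n : ℕ} {X : Type*} (a : X) (b : Fin (n - 1) → X) : Fin n → X :=
  fun j => if h : (j : ℕ) = 0 then a else b ⟨(j : ℕ) - 1, by have := j.isLt; omega⟩

/-- The matrix form `M(Γ)` of a blockwise signature: rows indexed by the first block,
columns by the remaining `n - 1` blocks. -/
def matrixForm {n ℓ : ℕ} (Γ : (Fin n → Fin ℓ → Bool) → ℂ) :
    Matrix (Fin ℓ → Bool) (Fin (n - 1) → Fin ℓ → Bool) ℂ :=
  Matrix.of fun a b => Γ (cons0 a b)

/-- XOR block `j` of `α` with `c`, leaving the other blocks unchanged. -/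
def flipBlock {n ℓ : ℕ} (α : Fin n → Fin ℓ → Bool) (j : Fin n) (c : Fin ℓ → Bool) :
    Fin n → Fin ℓ → Bool := Function.update α j (bxor (α j) c)

/-- Insert block `c` at position `t` into a tuple of `n - 1` blocks. -/
def insertAt {n ℓ : ℕ} (t : Fin n) (c : Fin ℓ → Bool) (β : Fin (n - 1) → Fin ℓ → Bool) :
    Fin n → Fin ℓ → Bool :=
  fun j =>
    if h1 : (j : ℕ) = (t : ℕ) then c
    else if h2 : (j : ℕ) < (t : ℕ) then
      β ⟨(j : ℕ), by have := t.isLt; have := j.isLt; omega⟩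
    else β ⟨(j : ℕ) - 1, by have := t.isLt; have := j.isLt; omega⟩

/-- The parity condition for a flat (Boolean-bit) signature. -/
def ParityCond1 {m : ℕ} (Γ : (Fin m → Bool) → ℂ) : Prop :=
  (∀ α, wt α % 2 = 0 → Γ α = 0) ∨ (∀ α, wt α % 2 = 1 → Γ α = 0)

/-- The Matchgate Identities for a flat (Boolean-bit) signature. -/
def MGI1 {m : ℕ} (Γ : (Fin m → Bool) → ℂ) : Prop :=
  ∀ (α : Fin m → Bool) (P : Finset (Fin m)),
    ∑ p ∈ P,
      (-1 : ℂ) ^ (P.filter fun q => q ≤ p).card *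
        Γ (fun k => Bool.xor (α k) (decide (k = p))) *
        Γ (fun k => Bool.xor (α k) (Bool.xor (decide (k ∈ P)) (decide (k = p)))) = 0

lemma bA1 (x a : Bool) : Bool.xor (Bool.xor x a) a = x := by cases x <;> cases a <;> rfl

lemma bA2 (x a b : Bool) (hab : ¬(a = true ∧ b = true)) :
    Bool.xor (Bool.xor x a) b = Bool.xor x (a || b) := by
  cases x <;> cases a <;> cases b <;> simp_all

lemma bB1 (x a b c d : Bool) :
    Bool.xor (Bool.xor x a) (Bool.xor (a || b || c || d) a) = Bool.xor x (a || b || c || d) := by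
  cases x <;> cases a <;> cases b <;> cases c <;> cases d <;> rfl

lemma bB2 (x a b c d : Bool) (hab : ¬(a = true ∧ b = true)) (hac : ¬(a = true ∧ c = true)) (had : ¬(a = true ∧ d = true)) (hbc : ¬(b = true ∧ c = true)) (hbd : ¬(b = true ∧ d = true)) (hcd : ¬(c = true ∧ d = true)) :
    Bool.xor (Bool.xor x a) (Bool.xor (a || b || c || d) b) = Bool.xor x (c || d) := by
  cases x <;> cases a <;> cases b <;> cases c <;> cases d <;> simp_all

lemma bB3 (x a b c d : Bool) (hab : ¬(a = true ∧ b = true)) (hac : ¬(a = true ∧ c = true)) (had : ¬(a = true ∧ d = true)) (hbc : ¬(b = true ∧ c = true)) (hbd : ¬(b = true ∧ d = true)) (hcd : ¬(c = true ∧ d = true)) :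
    Bool.xor (Bool.xor x a) (Bool.xor (a || b || c || d) c) = Bool.xor x (b || d) := by
  cases x <;> cases a <;> cases b <;> cases c <;> cases d <;> simp_all

lemma bB4 (x a b c d : Bool) (hab : ¬(a = true ∧ b = true)) (hac : ¬(a = true ∧ c = true)) (had : ¬(a = true ∧ d = true)) (hbc : ¬(b = true ∧ c = true)) (hbd : ¬(b = true ∧ d = true)) (hcd : ¬(c = true ∧ d = true)) :
    Bool.xor (Bool.xor x a) (Bool.xor (a || b || c || d) d) = Bool.xor x (b || c) := by
  cases x <;> cases a <;> cases b <;> cases c <;> cases d <;> simp_all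

lemma star {n ℓ : ℕ} (Γ : (Fin n → Fin ℓ → Bool) → ℂ) (hmgi : MGI Γ)
    (α : Fin n → Fin ℓ → Bool) (p1 p2 p3 p4 : Fin n × Fin ℓ)
    (h12 : p1.1 = p2.1 ∧ p1.2 < p2.2) (h13 : p1.1 < p3.1) (h23 : p2.1 < p3.1)
    (h14 : p1.1 < p4.1) (h24 : p2.1 < p4.1) (h34 : p3.1 < p4.1) :
    Γ α * Γ (fun j i => Bool.xor (α j i)
        (decide ((j,i) = p1) || decide ((j,i) = p2) || decide ((j,i) = p3) || decide ((j,i) = p4)))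
      - Γ (fun j i => Bool.xor (α j i) (decide ((j,i) = p1) || decide ((j,i) = p2)))
        * Γ (fun j i => Bool.xor (α j i) (decide ((j,i) = p3) || decide ((j,i) = p4)))
      - (Γ (fun j i => Bool.xor (α j i) (decide ((j,i) = p1) || decide ((j,i) = p4)))
          * Γ (fun j i => Bool.xor (α j i) (decide ((j,i) = p2) || decide ((j,i) = p3)))
        - Γ (fun j i => Bool.xor (α j i) (decide ((j,i) = p1) || decide ((j,i) = p3)))
          * Γ (fun j i => Bool.xor (α j i) (decide ((j,i) = p2) || decide ((j,i) = p4)))) = 0 := by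
  have hne12 : p1 ≠ p2 := by rintro rfl; exact lt_irrefl _ h12.2
  have hne13 : p1 ≠ p3 := by rintro rfl; exact lt_irrefl _ h13
  have hne14 : p1 ≠ p4 := by rintro rfl; exact lt_irrefl _ h14
  have hne23 : p2 ≠ p3 := by rintro rfl; exact lt_irrefl _ h23
  have hne24 : p2 ≠ p4 := by rintro rfl; exact lt_irrefl _ h24
  have hne34 : p3 ≠ p4 := by rintro rfl; exact lt_irrefl _ h34
  have hmem := hmgi (fun j i => Bool.xor (α j i) (decide ((j,i) = p1))) ({p1, p2, p3, p4} : Finset _)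
  rw [Finset.sum_insert (by simp [hne12, hne13, hne14]),
      Finset.sum_insert (by simp [hne23, hne24]),
      Finset.sum_insert (by simp [hne34]), Finset.sum_singleton] at hmem
  -- order facts
  have L11 : p1.1 < p1.1 ∨ (p1.1 = p1.1 ∧ p1.2 ≤ p1.2) := Or.inr ⟨rfl, le_refl _⟩
  have L21 : ¬ (p2.1 < p1.1 ∨ (p2.1 = p1.1 ∧ p2.2 ≤ p1.2)) := by
    rintro (h | ⟨h, h'⟩)
    · exact absurd (h12.1 ▸ h) (lt_irrefl _)
    · exact absurd h' (not_le.mpr h12.2)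
  have L31 : ¬ (p3.1 < p1.1 ∨ (p3.1 = p1.1 ∧ p3.2 ≤ p1.2)) := by
    rintro (h | ⟨h, h'⟩)
    · exact absurd h13 (asymm h)
    · exact absurd h13 (h ▸ lt_irrefl _)
  have L41 : ¬ (p4.1 < p1.1 ∨ (p4.1 = p1.1 ∧ p4.2 ≤ p1.2)) := by
    rintro (h | ⟨h, h'⟩)
    · exact absurd h14 (asymm h)
    · exact absurd h14 (h ▸ lt_irrefl _)
  have L12 : p1.1 < p2.1 ∨ (p1.1 = p2.1 ∧ p1.2 ≤ p2.2) := Or.inr ⟨h12.1, le_of_lt h12.2⟩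
  have L22 : p2.1 < p2.1 ∨ (p2.1 = p2.1 ∧ p2.2 ≤ p2.2) := Or.inr ⟨rfl, le_refl _⟩
  have L32 : ¬ (p3.1 < p2.1 ∨ (p3.1 = p2.1 ∧ p3.2 ≤ p2.2)) := by
    rintro (h | ⟨h, h'⟩)
    · exact absurd h23 (asymm h)
    · exact absurd h23 (h ▸ lt_irrefl _)
  have L42 : ¬ (p4.1 < p2.1 ∨ (p4.1 = p2.1 ∧ p4.2 ≤ p2.2)) := by
    rintro (h | ⟨h, h'⟩)
    · exact absurd h24 (asymm h)
    · exact absurd h24 (h ▸ lt_irrefl _)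
  have L13 : p1.1 < p3.1 ∨ (p1.1 = p3.1 ∧ p1.2 ≤ p3.2) := Or.inl h13
  have L23 : p2.1 < p3.1 ∨ (p2.1 = p3.1 ∧ p2.2 ≤ p3.2) := Or.inl h23
  have L33 : p3.1 < p3.1 ∨ (p3.1 = p3.1 ∧ p3.2 ≤ p3.2) := Or.inr ⟨rfl, le_refl _⟩
  have L43 : ¬ (p4.1 < p3.1 ∨ (p4.1 = p3.1 ∧ p4.2 ≤ p3.2)) := by
    rintro (h | ⟨h, h'⟩)
    · exact absurd h34 (asymm h)
    · exact absurd h34 (h ▸ lt_irrefl _)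
  have L14 : p1.1 < p4.1 ∨ (p1.1 = p4.1 ∧ p1.2 ≤ p4.2) := Or.inl h14
  have L24 : p2.1 < p4.1 ∨ (p2.1 = p4.1 ∧ p2.2 ≤ p4.2) := Or.inl h24
  have L34 : p3.1 < p4.1 ∨ (p3.1 = p4.1 ∧ p3.2 ≤ p4.2) := Or.inl h34
  have L44 : p4.1 < p4.1 ∨ (p4.1 = p4.1 ∧ p4.2 ≤ p4.2) := Or.inr ⟨rfl, le_refl _⟩
  have c1 : (({p1, p2, p3, p4} : Finset (Fin n × Fin ℓ)).filter
      fun q => q.1 < p1.1 ∨ (q.1 = p1.1 ∧ q.2 ≤ p1.2)).card = 1 := by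
    rw [Finset.filter_insert, if_pos L11, Finset.filter_insert, if_neg L21,
        Finset.filter_insert, if_neg L31, Finset.filter_singleton, if_neg L41]
    simp
  have c2 : (({p1, p2, p3, p4} : Finset (Fin n × Fin ℓ)).filter
      fun q => q.1 < p2.1 ∨ (q.1 = p2.1 ∧ q.2 ≤ p2.2)).card = 2 := by
    rw [Finset.filter_insert, if_pos L12, Finset.filter_insert, if_pos L22,
        Finset.filter_insert, if_neg L32, Finset.filter_singleton, if_neg L42]
    simp [hne12]
  have c3 : (({p1, p2, p3, p4} : Finset (Fin n × Fin ℓ)).filter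
      fun q => q.1 < p3.1 ∨ (q.1 = p3.1 ∧ q.2 ≤ p3.2)).card = 3 := by
    rw [Finset.filter_insert, if_pos L13, Finset.filter_insert, if_pos L23,
        Finset.filter_insert, if_pos L33, Finset.filter_singleton, if_neg L43]
    rw [Finset.card_insert_of_notMem (by simp [hne12, hne13]),
        Finset.card_insert_of_notMem (by simp [hne23])]
    simp
  have c4 : (({p1, p2, p3, p4} : Finset (Fin n × Fin ℓ)).filter
      fun q => q.1 < p4.1 ∨ (q.1 = p4.1 ∧ q.2 ≤ p4.2)).card = 4 := by
    rw [Finset.filter_insert, if_pos L14, Finset.filter_insert, if_pos L24,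
        Finset.filter_insert, if_pos L34, Finset.filter_singleton, if_pos L44]
    rw [Finset.card_insert_of_notMem (by simp [hne12, hne13, hne14]),
        Finset.card_insert_of_notMem (by simp [hne23, hne24]),
        Finset.card_insert_of_notMem (by simp [hne34])]
    simp
  rw [c1, c2, c3, c4] at hmem
  simp only [Finset.mem_insert, Finset.mem_singleton] at hmem
  have D : ∀ (u v : Fin n × Fin ℓ), u ≠ v → ∀ (q : Fin n × Fin ℓ), ¬(decide (q = u) = true ∧ decide (q = v) = true) := by
    intro u v huv q ⟨h1, h2⟩
    exact huv ((of_decide_eq_true h1).symm.trans (of_decide_eq_true h2))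
  have A1 : (fun j i => Bool.xor (Bool.xor (α j i) (decide ((j,i) = p1))) (decide ((j,i) = p1))) = α := by
    funext j i; simp [Bool.xor_assoc]
  have A2 : (fun j i => Bool.xor (Bool.xor (α j i) (decide ((j,i) = p1))) (decide ((j,i) = p2))) = (fun j i => Bool.xor (α j i) (decide ((j,i) = p1) || decide ((j,i) = p2))) := by
    funext j i; exact bA2 _ _ _ (D _ _ hne12 _)
  have A3 : (fun j i => Bool.xor (Bool.xor (α j i) (decide ((j,i) = p1))) (decide ((j,i) = p3))) = (fun j i => Bool.xor (α j i) (decide ((j,i) = p1) || decide ((j,i) = p3))) := by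
    funext j i; exact bA2 _ _ _ (D _ _ hne13 _)
  have A4 : (fun j i => Bool.xor (Bool.xor (α j i) (decide ((j,i) = p1))) (decide ((j,i) = p4))) = (fun j i => Bool.xor (α j i) (decide ((j,i) = p1) || decide ((j,i) = p4))) := by
    funext j i; exact bA2 _ _ _ (D _ _ hne14 _)
  have B1 : (fun j i => Bool.xor (Bool.xor (α j i) (decide ((j,i) = p1))) (Bool.xor (decide ((j,i) = p1 ∨ (j,i) = p2 ∨ (j,i) = p3 ∨ (j,i) = p4)) (decide ((j,i) = p1)))) = (fun j i => Bool.xor (α j i) (decide ((j,i) = p1) || decide ((j,i) = p2) || decide ((j,i) = p3) || decide ((j,i) = p4))) := by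
    funext j i
    rw [show (decide ((j,i) = p1 ∨ (j,i) = p2 ∨ (j,i) = p3 ∨ (j,i) = p4)) = (decide ((j,i) = p1) || decide ((j,i) = p2) || decide ((j,i) = p3) || decide ((j,i) = p4)) from by simp [Bool.or_assoc]]
    exact bB1 _ _ _ _ _
  have B2 : (fun j i => Bool.xor (Bool.xor (α j i) (decide ((j,i) = p1))) (Bool.xor (decide ((j,i) = p1 ∨ (j,i) = p2 ∨ (j,i) = p3 ∨ (j,i) = p4)) (decide ((j,i) = p2)))) = (fun j i => Bool.xor (α j i) (decide ((j,i) = p3) || decide ((j,i) = p4))) := by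
    funext j i
    rw [show (decide ((j,i) = p1 ∨ (j,i) = p2 ∨ (j,i) = p3 ∨ (j,i) = p4)) = (decide ((j,i) = p1) || decide ((j,i) = p2) || decide ((j,i) = p3) || decide ((j,i) = p4)) from by simp [Bool.or_assoc]]
    exact bB2 _ _ _ _ _ (D _ _ hne12 _) (D _ _ hne13 _) (D _ _ hne14 _) (D _ _ hne23 _) (D _ _ hne24 _) (D _ _ hne34 _)
  have B3 : (fun j i => Bool.xor (Bool.xor (α j i) (decide ((j,i) = p1))) (Bool.xor (decide ((j,i) = p1 ∨ (j,i) = p2 ∨ (j,i) = p3 ∨ (j,i) = p4)) (decide ((j,i) = p3)))) = (fun j i => Bool.xor (α j i) (decide ((j,i) = p2) || decide ((j,i) = p4))) := by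
    funext j i
    rw [show (decide ((j,i) = p1 ∨ (j,i) = p2 ∨ (j,i) = p3 ∨ (j,i) = p4)) = (decide ((j,i) = p1) || decide ((j,i) = p2) || decide ((j,i) = p3) || decide ((j,i) = p4)) from by simp [Bool.or_assoc]]
    exact bB3 _ _ _ _ _ (D _ _ hne12 _) (D _ _ hne13 _) (D _ _ hne14 _) (D _ _ hne23 _) (D _ _ hne24 _) (D _ _ hne34 _)
  have B4 : (fun j i => Bool.xor (Bool.xor (α j i) (decide ((j,i) = p1))) (Bool.xor (decide ((j,i) = p1 ∨ (j,i) = p2 ∨ (j,i) = p3 ∨ (j,i) = p4)) (decide ((j,i) = p4)))) = (fun j i => Bool.xor (α j i) (decide ((j,i) = p2) || decide ((j,i) = p3))) := by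
    funext j i
    rw [show (decide ((j,i) = p1 ∨ (j,i) = p2 ∨ (j,i) = p3 ∨ (j,i) = p4)) = (decide ((j,i) = p1) || decide ((j,i) = p2) || decide ((j,i) = p3) || decide ((j,i) = p4)) from by simp [Bool.or_assoc]]
    exact bB4 _ _ _ _ _ (D _ _ hne12 _) (D _ _ hne13 _) (D _ _ hne14 _) (D _ _ hne23 _) (D _ _ hne24 _) (D _ _ hne34 _)
  rw [A1, B1, A2, B2, A3, B3, A4, B4] at hmem
  linear_combination -hmem



/-- Lemma on matrix `A`: for a blockwise symmetric signature satisfying the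
MGI, every `2×2` submatrix whose rows differ by `e_i + e_j` in block 1 and whose columns
differ by `e_s` in block 2 and `e_t` in block 3 is degenerate. -/
theorem stmt8 (n ℓ : ℕ) (hn : 3 ≤ n) (hℓ : 1 ≤ ℓ)
    (Γ : (Fin n → Fin ℓ → Bool) → ℂ)
    (hsym : BlockSym Γ) (hmgi : MGI Γ) :
    ∀ (α : Fin n → Fin ℓ → Bool) (i j s t : Fin ℓ), i < j →
      Matrix.det
        !![Γ α,
           Γ (flipBlock (flipBlock α ⟨1, by omega⟩ (unit s)) ⟨2, by omega⟩ (unit t));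
           Γ (flipBlock α ⟨0, by omega⟩ (bxor (unit i) (unit j))),
           Γ (flipBlock (flipBlock (flipBlock α ⟨0, by omega⟩ (bxor (unit i) (unit j)))
               ⟨1, by omega⟩ (unit s)) ⟨2, by omega⟩ (unit t))] = 0 := by
  intro α i j s t hij
  have h0n : (0:ℕ) < n := by omega
  have h1n : (1:ℕ) < n := by omega
  have h2n : (2:ℕ) < n := by omega
  have lt01 : (⟨0, h0n⟩ : Fin n) < ⟨1, h1n⟩ := Fin.mk_lt_mk.mpr (by omega)
  have lt02 : (⟨0, h0n⟩ : Fin n) < ⟨2, h2n⟩ := Fin.mk_lt_mk.mpr (by omega)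
  have lt12 : (⟨1, h1n⟩ : Fin n) < ⟨2, h2n⟩ := Fin.mk_lt_mk.mpr (by omega)
  have hb01 : (⟨0, h0n⟩ : Fin n) ≠ ⟨1, h1n⟩ := ne_of_lt lt01
  have hb02 : (⟨0, h0n⟩ : Fin n) ≠ ⟨2, h2n⟩ := ne_of_lt lt02
  have hb12 : (⟨1, h1n⟩ : Fin n) ≠ ⟨2, h2n⟩ := ne_of_lt lt12
  have hijne : i ≠ j := Fin.ne_of_lt hij
  have S1 := star Γ hmgi α ((⟨0, h0n⟩ : Fin n), i) ((⟨0, h0n⟩ : Fin n), j)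
      ((⟨1, h1n⟩ : Fin n), s) ((⟨2, h2n⟩ : Fin n), t) ⟨rfl, hij⟩ lt01 lt01 lt02 lt02 lt12
  have S2 := star Γ hmgi (α ∘ ⇑(Equiv.swap (⟨1, h1n⟩ : Fin n) ⟨2, h2n⟩))
      ((⟨0, h0n⟩ : Fin n), i) ((⟨0, h0n⟩ : Fin n), j)
      ((⟨1, h1n⟩ : Fin n), t) ((⟨2, h2n⟩ : Fin n), s) ⟨rfl, hij⟩ lt01 lt01 lt02 lt02 lt12
  set σ := Equiv.swap (⟨1, h1n⟩ : Fin n) (⟨2, h2n⟩ : Fin n) with hσ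
  have swp0 : ∀ (u : Fin n) (v c : Fin ℓ),
      decide ((σ u, v) = ((⟨0, h0n⟩ : Fin n), c)) = decide ((u, v) = ((⟨0, h0n⟩ : Fin n), c)) := by
    intro u v c
    simp only [decide_eq_decide, Prod.mk.injEq, hσ]
    rw [Equiv.swap_apply_eq_iff, Equiv.swap_apply_of_ne_of_ne hb01 hb02]
  have swp1 : ∀ (u : Fin n) (v c : Fin ℓ),
      decide ((σ u, v) = ((⟨1, h1n⟩ : Fin n), c)) = decide ((u, v) = ((⟨2, h2n⟩ : Fin n), c)) := by
    intro u v c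
    simp only [decide_eq_decide, Prod.mk.injEq, hσ]
    rw [Equiv.swap_apply_eq_iff, Equiv.swap_apply_left]
  have swp2 : ∀ (u : Fin n) (v c : Fin ℓ),
      decide ((σ u, v) = ((⟨2, h2n⟩ : Fin n), c)) = decide ((u, v) = ((⟨1, h1n⟩ : Fin n), c)) := by
    intro u v c
    simp only [decide_eq_decide, Prod.mk.injEq, hσ]
    rw [Equiv.swap_apply_eq_iff, Equiv.swap_apply_right]
  have W1 : ((fun u v => Bool.xor (α u v) (decide ((u, v) = ((⟨0, h0n⟩ : Fin n), i)) || decide ((u, v) = ((⟨0, h0n⟩ : Fin n), j)) || decide ((u, v) = ((⟨1, h1n⟩ : Fin n), s)) || decide ((u, v) = ((⟨2, h2n⟩ : Fin n), t)))) ∘ ⇑σ) = (fun u v => Bool.xor ((α ∘ ⇑σ) u v) (decide ((u, v) = ((⟨0, h0n⟩ : Fin n), i)) || decide ((u, v) = ((⟨0, h0n⟩ : Fin n), j)) || decide ((u, v) = ((⟨1, h1n⟩ : Fin n), t)) || decide ((u, v) = ((⟨2, h2n⟩ : Fin n), s)))) := by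
    funext u v
    simp only [Function.comp_apply, swp0, swp1, swp2]
    try simp [Bool.or_comm, Bool.or_left_comm, Bool.or_assoc]
  have W2 : ((fun u v => Bool.xor (α u v) (decide ((u, v) = ((⟨0, h0n⟩ : Fin n), i)) || decide ((u, v) = ((⟨0, h0n⟩ : Fin n), j)))) ∘ ⇑σ) = (fun u v => Bool.xor ((α ∘ ⇑σ) u v) (decide ((u, v) = ((⟨0, h0n⟩ : Fin n), i)) || decide ((u, v) = ((⟨0, h0n⟩ : Fin n), j)))) := by
    funext u v
    simp only [Function.comp_apply, swp0, swp1, swp2]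
    try simp [Bool.or_comm, Bool.or_left_comm, Bool.or_assoc]
  have W3 : ((fun u v => Bool.xor (α u v) (decide ((u, v) = ((⟨1, h1n⟩ : Fin n), s)) || decide ((u, v) = ((⟨2, h2n⟩ : Fin n), t)))) ∘ ⇑σ) = (fun u v => Bool.xor ((α ∘ ⇑σ) u v) (decide ((u, v) = ((⟨1, h1n⟩ : Fin n), t)) || decide ((u, v) = ((⟨2, h2n⟩ : Fin n), s)))) := by
    funext u v
    simp only [Function.comp_apply, swp0, swp1, swp2]
    try simp [Bool.or_comm, Bool.or_left_comm, Bool.or_assoc]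
  have W4 : ((fun u v => Bool.xor (α u v) (decide ((u, v) = ((⟨0, h0n⟩ : Fin n), i)) || decide ((u, v) = ((⟨1, h1n⟩ : Fin n), s)))) ∘ ⇑σ) = (fun u v => Bool.xor ((α ∘ ⇑σ) u v) (decide ((u, v) = ((⟨0, h0n⟩ : Fin n), i)) || decide ((u, v) = ((⟨2, h2n⟩ : Fin n), s)))) := by
    funext u v
    simp only [Function.comp_apply, swp0, swp1, swp2]
    try simp [Bool.or_comm, Bool.or_left_comm, Bool.or_assoc]
  have W5 : ((fun u v => Bool.xor (α u v) (decide ((u, v) = ((⟨0, h0n⟩ : Fin n), j)) || decide ((u, v) = ((⟨2, h2n⟩ : Fin n), t)))) ∘ ⇑σ) = (fun u v => Bool.xor ((α ∘ ⇑σ) u v) (decide ((u, v) = ((⟨0, h0n⟩ : Fin n), j)) || decide ((u, v) = ((⟨1, h1n⟩ : Fin n), t)))) := by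
    funext u v
    simp only [Function.comp_apply, swp0, swp1, swp2]
    try simp [Bool.or_comm, Bool.or_left_comm, Bool.or_assoc]
  have W6 : ((fun u v => Bool.xor (α u v) (decide ((u, v) = ((⟨0, h0n⟩ : Fin n), i)) || decide ((u, v) = ((⟨2, h2n⟩ : Fin n), t)))) ∘ ⇑σ) = (fun u v => Bool.xor ((α ∘ ⇑σ) u v) (decide ((u, v) = ((⟨0, h0n⟩ : Fin n), i)) || decide ((u, v) = ((⟨1, h1n⟩ : Fin n), t)))) := by
    funext u v
    simp only [Function.comp_apply, swp0, swp1, swp2]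
    try simp [Bool.or_comm, Bool.or_left_comm, Bool.or_assoc]
  have W7 : ((fun u v => Bool.xor (α u v) (decide ((u, v) = ((⟨0, h0n⟩ : Fin n), j)) || decide ((u, v) = ((⟨1, h1n⟩ : Fin n), s)))) ∘ ⇑σ) = (fun u v => Bool.xor ((α ∘ ⇑σ) u v) (decide ((u, v) = ((⟨0, h0n⟩ : Fin n), j)) || decide ((u, v) = ((⟨2, h2n⟩ : Fin n), s)))) := by
    funext u v
    simp only [Function.comp_apply, swp0, swp1, swp2]
    try simp [Bool.or_comm, Bool.or_left_comm, Bool.or_assoc]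
  have RW1 : Γ (fun u v => Bool.xor ((α ∘ ⇑σ) u v) (decide ((u, v) = ((⟨0, h0n⟩ : Fin n), i)) || decide ((u, v) = ((⟨0, h0n⟩ : Fin n), j)) || decide ((u, v) = ((⟨1, h1n⟩ : Fin n), t)) || decide ((u, v) = ((⟨2, h2n⟩ : Fin n), s)))) = Γ (fun u v => Bool.xor (α u v) (decide ((u, v) = ((⟨0, h0n⟩ : Fin n), i)) || decide ((u, v) = ((⟨0, h0n⟩ : Fin n), j)) || decide ((u, v) = ((⟨1, h1n⟩ : Fin n), s)) || decide ((u, v) = ((⟨2, h2n⟩ : Fin n), t)))) := by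
    rw [← W1]; exact hsym σ _
  have RW2 : Γ (fun u v => Bool.xor ((α ∘ ⇑σ) u v) (decide ((u, v) = ((⟨0, h0n⟩ : Fin n), i)) || decide ((u, v) = ((⟨0, h0n⟩ : Fin n), j)))) = Γ (fun u v => Bool.xor (α u v) (decide ((u, v) = ((⟨0, h0n⟩ : Fin n), i)) || decide ((u, v) = ((⟨0, h0n⟩ : Fin n), j)))) := by
    rw [← W2]; exact hsym σ _
  have RW3 : Γ (fun u v => Bool.xor ((α ∘ ⇑σ) u v) (decide ((u, v) = ((⟨1, h1n⟩ : Fin n), t)) || decide ((u, v) = ((⟨2, h2n⟩ : Fin n), s)))) = Γ (fun u v => Bool.xor (α u v) (decide ((u, v) = ((⟨1, h1n⟩ : Fin n), s)) || decide ((u, v) = ((⟨2, h2n⟩ : Fin n), t)))) := by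
    rw [← W3]; exact hsym σ _
  have RW4 : Γ (fun u v => Bool.xor ((α ∘ ⇑σ) u v) (decide ((u, v) = ((⟨0, h0n⟩ : Fin n), i)) || decide ((u, v) = ((⟨2, h2n⟩ : Fin n), s)))) = Γ (fun u v => Bool.xor (α u v) (decide ((u, v) = ((⟨0, h0n⟩ : Fin n), i)) || decide ((u, v) = ((⟨1, h1n⟩ : Fin n), s)))) := by
    rw [← W4]; exact hsym σ _
  have RW5 : Γ (fun u v => Bool.xor ((α ∘ ⇑σ) u v) (decide ((u, v) = ((⟨0, h0n⟩ : Fin n), j)) || decide ((u, v) = ((⟨1, h1n⟩ : Fin n), t)))) = Γ (fun u v => Bool.xor (α u v) (decide ((u, v) = ((⟨0, h0n⟩ : Fin n), j)) || decide ((u, v) = ((⟨2, h2n⟩ : Fin n), t)))) := by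
    rw [← W5]; exact hsym σ _
  have RW6 : Γ (fun u v => Bool.xor ((α ∘ ⇑σ) u v) (decide ((u, v) = ((⟨0, h0n⟩ : Fin n), i)) || decide ((u, v) = ((⟨1, h1n⟩ : Fin n), t)))) = Γ (fun u v => Bool.xor (α u v) (decide ((u, v) = ((⟨0, h0n⟩ : Fin n), i)) || decide ((u, v) = ((⟨2, h2n⟩ : Fin n), t)))) := by
    rw [← W6]; exact hsym σ _
  have RW7 : Γ (fun u v => Bool.xor ((α ∘ ⇑σ) u v) (decide ((u, v) = ((⟨0, h0n⟩ : Fin n), j)) || decide ((u, v) = ((⟨2, h2n⟩ : Fin n), s)))) = Γ (fun u v => Bool.xor (α u v) (decide ((u, v) = ((⟨0, h0n⟩ : Fin n), j)) || decide ((u, v) = ((⟨1, h1n⟩ : Fin n), s)))) := by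
    rw [← W7]; exact hsym σ _
  have hA : Γ (α ∘ ⇑σ) = Γ α := hsym σ α
  rw [hA, RW1, RW2, RW3, RW4, RW5, RW6, RW7] at S2
  have Euij : bxor (unit i) (unit j) = fun v => decide (v = i) || decide (v = j) := by
    funext v
    by_cases hvi : v = i <;> by_cases hvj : v = j <;>
      simp [bxor, unit, hvi, hvj, hijne, Ne.symm hijne]
  have E1 : flipBlock (flipBlock α (⟨1, h1n⟩ : Fin n) (unit s)) (⟨2, h2n⟩ : Fin n) (unit t)
      = (fun u v => Bool.xor (α u v) (decide ((u, v) = ((⟨1, h1n⟩ : Fin n), s)) || decide ((u, v) = ((⟨2, h2n⟩ : Fin n), t)))) := by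
    funext u v
    by_cases h1 : u = (⟨1, h1n⟩ : Fin n) <;> by_cases h2 : u = (⟨2, h2n⟩ : Fin n) <;>
      simp [flipBlock, Function.update_apply, bxor, unit, Prod.ext_iff, h1, h2,
        hb01, hb02, hb12, Ne.symm hb01, Ne.symm hb02, Ne.symm hb12]
  have E2 : flipBlock α (⟨0, h0n⟩ : Fin n) (bxor (unit i) (unit j))
      = (fun u v => Bool.xor (α u v) (decide ((u, v) = ((⟨0, h0n⟩ : Fin n), i)) || decide ((u, v) = ((⟨0, h0n⟩ : Fin n), j)))) := by
    funext u v
    by_cases h0 : u = (⟨0, h0n⟩ : Fin n) <;> by_cases hvi : v = i <;> by_cases hvj : v = j <;>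
      simp [flipBlock, Function.update_apply, bxor, unit, Prod.ext_iff, h0, hvi, hvj,
        hijne, Ne.symm hijne]
  have E3 : flipBlock (flipBlock (flipBlock α (⟨0, h0n⟩ : Fin n) (bxor (unit i) (unit j)))
        (⟨1, h1n⟩ : Fin n) (unit s)) (⟨2, h2n⟩ : Fin n) (unit t)
      = (fun u v => Bool.xor (α u v) (decide ((u, v) = ((⟨0, h0n⟩ : Fin n), i)) || decide ((u, v) = ((⟨0, h0n⟩ : Fin n), j)) || decide ((u, v) = ((⟨1, h1n⟩ : Fin n), s)) || decide ((u, v) = ((⟨2, h2n⟩ : Fin n), t)))) := by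
    funext u v
    by_cases h0 : u = (⟨0, h0n⟩ : Fin n) <;> by_cases h1 : u = (⟨1, h1n⟩ : Fin n) <;>
      by_cases h2 : u = (⟨2, h2n⟩ : Fin n) <;> by_cases hvi : v = i <;> by_cases hvj : v = j <;>
      simp [flipBlock, Function.update_apply, bxor, unit, Prod.ext_iff, h0, h1, h2, hvi, hvj,
        hijne, Ne.symm hijne, hb01, hb02, hb12, Ne.symm hb01, Ne.symm hb02, Ne.symm hb12]
  rw [Matrix.det_fin_two_of, E3, E1, E2]
  linear_combination (S1 + S2) / 2



end Matchgate
end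

section
/- Let n ≥ 3, ℓ ≥ 1, and let Γ : ({0,1}^ℓ)^n → ℂ be a blockwise symmetric signature of arity nℓ satisfying the Matchgate Identities. Then for all α_1, α_2, …, α_n ∈ {0,1}^ℓ, all i, j ∈ {1,…,ℓ} with i < j, and all s, t ∈ {1,…,ℓ}, the two vectors (Γ(α_1,α_2,α_3,…,α_n), Γ(α_1+e_i+e_j,α_2,α_3,…,α_n)) and (Γ(α_1,α_2+e_s,α_3+e_t,α_4,…,α_n), Γ(α_1+e_i+e_j,α_2+e_s,α_3+e_t,α_4,…,α_n)) in ℂ² are linearly dependent. -/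
open Finset

/-!
Apply the Matchgate Identities to the pattern `α + e_(1,i)` and the four positions
`(1,i) < (1,j) < (2,s) < (3,t)`. This gives a four-term Grassmann–Plücker relation whose first
two terms form the determinant in question, while its last two terms are exchanged when blocks
`2` and `3` (and the bits `s`, `t`) are swapped. Blockwise symmetry makes the relation hold for
the swapped data as well, and adding the two relations cancels the last two terms.
-/

lemma Finset.decide_mem_insert_of_notMem {β : Type*} [DecidableEq β] {a x : β} {s : Finset β}
    (ha : a ∉ s) : decide (x ∈ insert a s) = (decide (x = a) ^^ decide (x ∈ s)) := by
  by_cases hx : x = a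
  · subst hx; simp [ha]
  · simp [hx]

lemma not_linearIndependent_fin_two_of_mul_sub_mul_eq_zero {K : Type*} [Field K] {a b c d : K}
    (h : a * d - b * c = 0) : ¬ LinearIndependent K ![![a, b], ![c, d]] := fun hli => by
  have hdet := (Matrix.isUnit_iff_isUnit_det _).mp
    (Matrix.linearIndependent_rows_iff_isUnit (A := !![a, b; c, d]).mp hli)
  rw [Matrix.det_fin_two_of, h] at hdet
  exact not_isUnit_zero hdet

namespace Matchgate

section Flips

variable {n ℓ : ℕ}

/-- `α + e_p`, in the form in which it occurs in `MGI`. -/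
def flipAt (α : Fin n → Fin ℓ → Bool) (p : Fin n × Fin ℓ) : Fin n → Fin ℓ → Bool :=
  fun j i => α j i ^^ decide ((j, i) = p)

lemma flipAt_comm (α : Fin n → Fin ℓ → Bool) (p q : Fin n × Fin ℓ) :
    flipAt (flipAt α p) q = flipAt (flipAt α q) p := by
  funext j i
  simp only [flipAt, Bool.xor_assoc, Bool.xor_comm (decide ((j, i) = p))]

lemma flipAt_flipAt_self (α : Fin n → Fin ℓ → Bool) (p : Fin n × Fin ℓ) :
    flipAt (flipAt α p) p = α := by
  funext j i
  simp [flipAt]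

lemma flipAt_comp (α : Fin n → Fin ℓ → Bool) (σ : Equiv.Perm (Fin n)) (p : Fin n × Fin ℓ) :
    flipAt (α ∘ σ) p = flipAt α (σ p.1, p.2) ∘ σ := by
  funext j i
  simp [flipAt, Prod.ext_iff, ← σ.eq_symm_apply]

lemma flipBlock_unit (α : Fin n → Fin ℓ → Bool) (k : Fin n) (m : Fin ℓ) :
    flipBlock α k (unit m) = flipAt α (k, m) := by
  funext j i
  by_cases hj : j = k <;> simp [flipBlock, flipAt, bxor, unit, hj]

lemma flipBlock_bxor_unit (α : Fin n → Fin ℓ → Bool) (k : Fin n) (m m' : Fin ℓ) :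
    flipBlock α k (bxor (unit m) (unit m')) = flipAt (flipAt α (k, m)) (k, m') := by
  funext j i
  by_cases hj : j = k <;> simp [flipBlock, flipAt, bxor, unit, hj]

end Flips

section Identities

variable {n ℓ : ℕ} {Γ : (Fin n → Fin ℓ → Bool) → ℂ}

theorem MGI.four_term (hmgi : MGI Γ) (α : Fin n → Fin ℓ → Bool) {p₁ p₂ p₃ p₄ : Fin n × Fin ℓ}
    (h₁₂ : toLex p₁ < toLex p₂) (h₂₃ : toLex p₂ < toLex p₃) (h₃₄ : toLex p₃ < toLex p₄) :
    Γ (flipAt α p₁) * Γ (flipAt (flipAt (flipAt α p₂) p₃) p₄)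
      - Γ (flipAt α p₂) * Γ (flipAt (flipAt (flipAt α p₁) p₃) p₄)
      + Γ (flipAt α p₃) * Γ (flipAt (flipAt (flipAt α p₁) p₂) p₄)
      - Γ (flipAt α p₄) * Γ (flipAt (flipAt (flipAt α p₁) p₂) p₃) = 0 := by
  have h₁₃ := h₁₂.trans h₂₃
  have h₁₄ := h₁₃.trans h₃₄
  have h₂₄ := h₂₃.trans h₃₄
  have d₁₂ := ne_of_apply_ne toLex h₁₂.ne
  have d₁₃ := ne_of_apply_ne toLex h₁₃.ne
  have d₁₄ := ne_of_apply_ne toLex h₁₄.ne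
  have d₂₃ := ne_of_apply_ne toLex h₂₃.ne
  have d₂₄ := ne_of_apply_ne toLex h₂₄.ne
  have d₃₄ := ne_of_apply_ne toLex h₃₄.ne
  set P : Finset (Fin n × Fin ℓ) := {p₁, p₂, p₃, p₄} with hP
  have h₁ : p₁ ∉ ({p₂, p₃, p₄} : Finset _) := by simp [d₁₂, d₁₃, d₁₄]
  have h₂ : p₂ ∉ ({p₃, p₄} : Finset _) := by simp [d₂₃, d₂₄]
  have h₃ : p₃ ∉ ({p₄} : Finset _) := by simp [d₃₄]
  have hmem : ∀ x, decide (x ∈ P) =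
      (decide (x = p₁) ^^ decide (x = p₂) ^^ decide (x = p₃) ^^ decide (x = p₄)) := by
    intro x
    rw [hP, decide_mem_insert_of_notMem h₁, decide_mem_insert_of_notMem h₂,
      decide_mem_insert_of_notMem h₃]
    simp only [mem_singleton, Bool.xor_assoc]
  have H := hmgi α P
  simp only [← Prod.Lex.toLex_le_toLex, hP, sum_insert h₁, sum_insert h₂, sum_insert h₃,
    sum_singleton] at H
  have r₁ : #(P.filter (toLex · ≤ toLex p₁)) = 1 := by
    simp [hP, filter_insert, filter_singleton, h₁₂.not_ge, h₁₃.not_ge, h₁₄.not_ge]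
  have r₂ : #(P.filter (toLex · ≤ toLex p₂)) = 2 := by
    simp [hP, filter_insert, filter_singleton, h₁₂.le, h₂₃.not_ge, h₂₄.not_ge, d₁₂]
  have r₃ : #(P.filter (toLex · ≤ toLex p₃)) = 3 := by
    simp [hP, filter_insert, filter_singleton, h₁₃.le, h₂₃.le, h₃₄.not_ge, d₁₂, d₁₃, d₂₃]
  have r₄ : #(P.filter (toLex · ≤ toLex p₄)) = 4 := by
    simp [hP, filter_insert, filter_singleton, h₁₄.le, h₂₄.le, h₃₄.le, d₁₂, d₁₃, d₁₄, d₂₃, d₂₄,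
      d₃₄]
  simp only [← hP, hmem, r₁, r₂, r₃, r₄] at H
  unfold flipAt
  simp only [Bool.xor_assoc, Bool.xor_comm, Bool.xor_left_comm, Bool.bne_self_left, Bool.xor_self,
    Bool.false_xor] at H ⊢
  linear_combination -H

theorem MGI.three_block_identity (hmgi : MGI Γ) (α : Fin n → Fin ℓ → Bool) {a b c : Fin n}
    (hab : a < b) (hbc : b < c) {i j : Fin ℓ} (hij : i < j) (s t : Fin ℓ) :
    Γ α * Γ (flipAt (flipAt (flipAt (flipAt α (a, i)) (a, j)) (b, s)) (c, t))
      - Γ (flipAt (flipAt α (a, i)) (a, j)) * Γ (flipAt (flipAt α (b, s)) (c, t))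
      + Γ (flipAt (flipAt α (a, i)) (b, s)) * Γ (flipAt (flipAt α (a, j)) (c, t))
      - Γ (flipAt (flipAt α (a, i)) (c, t)) * Γ (flipAt (flipAt α (a, j)) (b, s)) = 0 := by
  simpa only [flipAt_flipAt_self] using
    hmgi.four_term (flipAt α (a, i)) (p₁ := (a, i)) (p₂ := (a, j)) (p₃ := (b, s)) (p₄ := (c, t))
    (Prod.Lex.toLex_lt_toLex.2 (.inr ⟨rfl, hij⟩)) (Prod.Lex.toLex_lt_toLex.2 (.inl hab))
    (Prod.Lex.toLex_lt_toLex.2 (.inl hbc))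

theorem MGI.det_eq_zero_of_blockSym (hmgi : MGI Γ) (hsym : BlockSym Γ)
    (α : Fin n → Fin ℓ → Bool) {a b c : Fin n} (hab : a < b) (hbc : b < c) {i j : Fin ℓ}
    (hij : i < j) (s t : Fin ℓ) :
    Γ α * Γ (flipAt (flipAt (flipAt (flipAt α (a, i)) (a, j)) (b, s)) (c, t))
      - Γ (flipAt (flipAt α (a, i)) (a, j)) * Γ (flipAt (flipAt α (b, s)) (c, t)) = 0 := by
  have h := hmgi.three_block_identity α hab hbc hij s t
  have h_swap := hmgi.three_block_identity (α ∘ Equiv.swap b c) hab hbc hij t s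
  simp only [flipAt_comp, hsym (Equiv.swap b c), Equiv.swap_apply_left, Equiv.swap_apply_right,
    Equiv.swap_apply_of_ne_of_ne hab.ne (hab.trans hbc).ne, flipAt_comm _ (c, t) (b, s)] at h_swap
  linear_combination (h + h_swap) / 2

end Identities

/-- Corollary: for a blockwise symmetric signature satisfying the MGI, the
two column vectors of the matrix of Statement 8 are linearly dependent. -/
theorem stmt9 (n ℓ : ℕ) (hn : 3 ≤ n)
    (Γ : (Fin n → Fin ℓ → Bool) → ℂ)
    (hsym : BlockSym Γ) (hmgi : MGI Γ) :
    ∀ (α : Fin n → Fin ℓ → Bool) (i j s t : Fin ℓ), i < j →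
      ¬ LinearIndependent ℂ
        ![![Γ α, Γ (flipBlock α ⟨0, by omega⟩ (bxor (unit i) (unit j)))],
          ![Γ (flipBlock (flipBlock α ⟨1, by omega⟩ (unit s)) ⟨2, by omega⟩ (unit t)),
            Γ (flipBlock (flipBlock (flipBlock α ⟨0, by omega⟩ (bxor (unit i) (unit j)))
                ⟨1, by omega⟩ (unit s)) ⟨2, by omega⟩ (unit t))]] := by
  intro α i j s t hij
  simp only [flipBlock_bxor_unit, flipBlock_unit]
  exact not_linearIndependent_fin_two_of_mul_sub_mul_eq_zero <|
    hmgi.det_eq_zero_of_blockSym hsym α (Fin.mk_lt_mk.2 zero_lt_one) (Fin.mk_lt_mk.2 one_lt_two)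
      hij s t

end Matchgate
end

section
/- Let q ≥ 1, n ≥ 2, ℓ ≥ 1, and let M be a q × 2^ℓ complex matrix of rank q. Let (=_n) : [q]^n → ℂ be the Equality signature, (=_n)(i_1,…,i_n) = 1 if i_1 = ⋯ = i_n and 0 otherwise, and let Γ = (=_n) M^{⊗n} be the transformed signature, Γ(α_1,…,α_n) = Σ_{i_1,…,i_n ∈ [q]} (=_n)(i_1,…,i_n) · M_{i_1}^{α_1} ⋯ M_{i_n}^{α_n} = Σ_{i ∈ [q]} M_i^{α_1} M_i^{α_2} ⋯ M_i^{α_n}. Then the matrix form M(Γ) has rank exactly q. -/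
open Finset

namespace Matchgate

/-- the matrix form of the transformed Equality signature
`Γ = (=_n) M^{⊗n}` for a rank-`q` matrix `M` has rank exactly `q`. -/
theorem stmt12 (q n ℓ : ℕ) (hq : 1 ≤ q) (hn : 2 ≤ n) (hℓ : 1 ≤ ℓ)
    (M : Matrix (Fin q) (Fin ℓ → Bool) ℂ) (hM : M.rank = q)
    (Γ : (Fin n → Fin ℓ → Bool) → ℂ)
    (hΓ : ∀ α, Γ α = ∑ i : Fin q, ∏ j, M i (α j)) :
    (matrixForm Γ).rank = q := by
  obtain ⟨m, rfl⟩ : ∃ m, n = m + 1 := ⟨n - 1, by omega⟩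
  have hm : 1 ≤ m := by omega
  -- M has a right inverse G
  have hsurj : Function.Surjective M.mulVecLin := by
    rw [← LinearMap.range_eq_top]
    apply Submodule.eq_top_of_finrank_eq
    have : M.rank = Module.finrank ℂ (LinearMap.range M.mulVecLin) := rfl
    rw [← this, hM]
    simp
  choose x hx using fun i => hsurj (Pi.single i 1)
  set N : Matrix (Fin q) (Fin m → Fin ℓ → Bool) ℂ :=
    Matrix.of fun i b => ∏ j, M i (b j) with hN
  set Q : Matrix (Fin m → Fin ℓ → Bool) (Fin q) ℂ :=
    Matrix.of fun b i => ∏ j, x i (b j) with hQ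
  have hNQ : N * Q = 1 := by
    ext i i'
    simp only [Matrix.mul_apply, hN, hQ, Matrix.of_apply]
    have : ∀ b : Fin m → Fin ℓ → Bool,
        (∏ j, M i (b j)) * ∏ j, x i' (b j) = ∏ j, M i (b j) * x i' (b j) := by
      intro b; rw [← Finset.prod_mul_distrib]
    simp_rw [this]
    have hps := Finset.prod_univ_sum (fun _ : Fin m => (Finset.univ : Finset (Fin ℓ → Bool)))
      (fun j a => M i a * x i' a)
    rw [Fintype.piFinset_univ] at hps
    rw [← hps]
    have hdot : ∑ a, M i a * x i' a = (Pi.single i' 1 : Fin q → ℂ) i := by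
      have := congrFun (hx i') i
      simpa [Matrix.mulVecLin, Matrix.mulVec, dotProduct] using this
    rw [Finset.prod_congr rfl fun j _ => hdot]
    by_cases h : i = i'
    · subst h; simp [Matrix.one_apply]
    · rw [Pi.single_apply, if_neg (fun e => h e)]
      rw [Finset.prod_const]
      rw [Finset.card_univ, Fintype.card_fin, zero_pow (by omega : m ≠ 0)]
      simp [Matrix.one_apply, h]
  have hMF : matrixForm Γ = M.transpose * N := by
    ext a b
    simp only [matrixForm, Matrix.of_apply, Matrix.mul_apply, Matrix.transpose_apply, hN]
    rw [hΓ]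
    apply Finset.sum_congr rfl
    intro i _
    rw [Fin.prod_univ_succ]
    have h0 : cons0 a b (0 : Fin (m+1)) = a := by simp [cons0]
    rw [h0]
    congr 1
  have h1 : (matrixForm Γ).rank ≤ q := by
    rw [hMF]
    calc (M.transpose * N).rank ≤ M.transpose.rank := Matrix.rank_mul_le_left _ _
      _ = M.rank := Matrix.rank_transpose M
      _ = q := hM
  have h2 : q ≤ (matrixForm Γ).rank := by
    have hX : M.transpose * N * Q = M.transpose := by
      rw [Matrix.mul_assoc, hNQ, Matrix.mul_one]
    calc q = M.transpose.rank := by rw [Matrix.rank_transpose, hM]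
      _ = (M.transpose * N * Q).rank := by rw [hX]
      _ ≤ (M.transpose * N).rank := Matrix.rank_mul_le_left _ _
      _ = (matrixForm Γ).rank := by rw [hMF]
  omega

end Matchgate
end
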